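/- arXiv:1112.3422 — 3 statements merged into one kernel-verified Lean document; each statement's English description precedes it below -/
import Mathlib

section
/- For each real s, the 8-dimensional Lie algebra n_s defined by [x₂,x₃]=e^{-s}x₄, [x₁,x₃]=e^{s}x₅, [x₁,x₂]=x₆, [x₂,x₆]=e^{s}x₇, [x₃,x₄]=e^{-s}x₇, [x₁,x₆]=e^{-s}x₈, [x₂,x₄]=x₈, [x₃,x₅]=e^{s}x₈ is three-step nilpotent: its lower central series satisfies n_s^(2) = span{x₄,…,x₈}, n_s^(3) = span{x₇,x₈}, and n_s^(4) = 0. -/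
/-!
Written out in coordinates (`bracket8_eq`), `[u, v]` has no `x₁, x₂, x₃` components, its
`x₄, x₅, x₆` components involve only `v₁, v₂, v₃`, and its `x₇, x₈` components only
`v₁, …, v₆`. Hence each term of the lower central series lies in the claimed coordinate
subspace, and the last one vanishes. Conversely, every basis vector of the claimed subspace is
a bracket `[c xᵢ, xⱼ]` with `xⱼ` in the previous term, the factor `c = e^{±s}` cancelling the
structure constant.
-/

open Real in
/-- Brackets of basis vectors `[xᵢ, xⱼ]` (for `i < j`) of the 8-dimensional
Lie algebra `n_s`, with `x₁,…,x₈` identified with `Pi.single 0 1, …, Pi.single 7 1`. -/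
noncomputable def sc8 (s : ℝ) (i j : Fin 8) : Fin 8 → ℝ :=
  if i = 1 ∧ j = 2 then exp (-s) • (Pi.single 3 1 : Fin 8 → ℝ)
  else if i = 0 ∧ j = 2 then exp s • (Pi.single 4 1 : Fin 8 → ℝ)
  else if i = 0 ∧ j = 1 then (Pi.single 5 1 : Fin 8 → ℝ)
  else if i = 1 ∧ j = 5 then exp s • (Pi.single 6 1 : Fin 8 → ℝ)
  else if i = 2 ∧ j = 3 then exp (-s) • (Pi.single 6 1 : Fin 8 → ℝ)
  else if i = 0 ∧ j = 5 then exp (-s) • (Pi.single 7 1 : Fin 8 → ℝ)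
  else if i = 1 ∧ j = 3 then (Pi.single 7 1 : Fin 8 → ℝ)
  else if i = 2 ∧ j = 4 then exp s • (Pi.single 7 1 : Fin 8 → ℝ)
  else 0

/-- Skew-symmetrized structure constants. -/
noncomputable def bb8 (s : ℝ) (i j : Fin 8) : Fin 8 → ℝ := sc8 s i j - sc8 s j i

/-- The skew-symmetric bilinear extension of the bracket relations of `n_s`. -/
noncomputable def bracket8 (s : ℝ) (u v : Fin 8 → ℝ) : Fin 8 → ℝ :=
  ∑ i : Fin 8, ∑ j : Fin 8, (u i * v j) • bb8 s i j

/-- The lower central series of `n_s`: `lcs8 s 0 = n_s⁽¹⁾ = n_s`,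
`lcs8 s n = n_s⁽ⁿ⁺¹⁾`. -/
noncomputable def lcs8 (s : ℝ) : ℕ → Submodule ℝ (Fin 8 → ℝ)
  | 0 => ⊤
  | n + 1 => Submodule.span ℝ
      {z : Fin 8 → ℝ | ∃ u : Fin 8 → ℝ, ∃ v ∈ lcs8 s n, z = bracket8 s u v}

open Real Submodule

lemma bracket8_eq (s : ℝ) (u v : Fin 8 → ℝ) :
    bracket8 s u v = ![0, 0, 0,
      exp (-s) * (u 1 * v 2 - u 2 * v 1),
      exp s * (u 0 * v 2 - u 2 * v 0),
      u 0 * v 1 - u 1 * v 0,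
      exp s * (u 1 * v 5 - u 5 * v 1) + exp (-s) * (u 2 * v 3 - u 3 * v 2),
      exp (-s) * (u 0 * v 5 - u 5 * v 0) + (u 1 * v 3 - u 3 * v 1) +
        exp s * (u 2 * v 4 - u 4 * v 2)] := by
  ext k
  fin_cases k <;> simp [bracket8, bb8, sc8, Fin.sum_univ_eight] <;> ring

lemma lcs8_succ_le_iff {s : ℝ} {n : ℕ} {N : Submodule ℝ (Fin 8 → ℝ)} :
    lcs8 s (n + 1) ≤ N ↔ ∀ u, ∀ v ∈ lcs8 s n, bracket8 s u v ∈ N := by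
  simp only [lcs8, span_le, Set.ofPred_subset, SetLike.mem_coe]
  constructor
  · exact fun h u v hv => h _ ⟨u, v, hv, rfl⟩
  · rintro h _ ⟨u, v, hv, rfl⟩
    exact h u v hv

lemma single_mem_lcs8_succ {s : ℝ} {n : ℕ} {k : Fin 8} (u : Fin 8 → ℝ) {v : Fin 8 → ℝ}
    (hv : v ∈ lcs8 s n) (h : bracket8 s u v = Pi.single k 1) :
    (Pi.single k 1 : Fin 8 → ℝ) ∈ lcs8 s (n + 1) :=
  h ▸ subset_span ⟨u, v, hv, rfl⟩

lemma lcs8_one (s : ℝ) :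
    lcs8 s 1 = Pi.spanSubset ℝ {3, 4, 5, 6, 7} := by
  apply le_antisymm
  · rw [lcs8_succ_le_iff]
    intro u v _
    rw [Pi.mem_spanSubset_iff, bracket8_eq]
    intro k hk
    fin_cases k <;> simp_all
  · simp only [Pi.spanSubset, Pi.basisFun_apply, span_le, Set.image_subset_iff,
      Set.insert_subset_iff, Set.singleton_subset_iff, Set.mem_preimage, SetLike.mem_coe]
    have top : ∀ v, v ∈ lcs8 s 0 := fun _ => mem_top
    refine ⟨single_mem_lcs8_succ (exp s • Pi.single 1 1) (top (Pi.single 2 1)) ?_,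
      single_mem_lcs8_succ (exp (-s) • Pi.single 0 1) (top (Pi.single 2 1)) ?_,
      single_mem_lcs8_succ (Pi.single 0 1) (top (Pi.single 1 1)) ?_,
      single_mem_lcs8_succ (exp s • Pi.single 2 1) (top (Pi.single 3 1)) ?_,
      single_mem_lcs8_succ (Pi.single 1 1) (top (Pi.single 3 1)) ?_⟩
    all_goals rw [bracket8_eq]; ext k; fin_cases k <;> simp [← exp_add]

lemma lcs8_two (s : ℝ) :
    lcs8 s 2 = Pi.spanSubset ℝ {6, 7} := by
  apply le_antisymm
  · rw [lcs8_succ_le_iff]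
    intro u v hv
    rw [lcs8_one, Pi.mem_spanSubset_iff] at hv
    rw [Pi.mem_spanSubset_iff, bracket8_eq]
    intro k hk
    fin_cases k <;> simp_all
  · simp only [Pi.spanSubset, Pi.basisFun_apply, span_le, Set.image_subset_iff,
      Set.insert_subset_iff, Set.singleton_subset_iff, Set.mem_preimage, SetLike.mem_coe]
    have mem : ∀ k ∈ ({3, 4, 5, 6, 7} : Set (Fin 8)), Pi.single k 1 ∈ lcs8 s 1 :=
      fun k hk => lcs8_one s ▸ subset_span ⟨k, hk, Pi.basisFun_apply ℝ _ k⟩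
    refine ⟨single_mem_lcs8_succ (exp (-s) • Pi.single 1 1) (mem 5 (by simp)) ?_,
      single_mem_lcs8_succ (Pi.single 1 1) (mem 3 (by simp)) ?_⟩
    all_goals rw [bracket8_eq]; ext k; fin_cases k <;> simp [← exp_add]

lemma lcs8_three (s : ℝ) : lcs8 s 3 = ⊥ := by
  rw [eq_bot_iff, lcs8_succ_le_iff]
  intro u v hv
  rw [lcs8_two, Pi.mem_spanSubset_iff] at hv
  rw [mem_bot, bracket8_eq]
  ext k
  fin_cases k <;> simp_all

/-- For each real `s`, `n_s` is three-step nilpotent with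
`n_s⁽²⁾ = span{x₄,…,x₈}`, `n_s⁽³⁾ = span{x₇,x₈}` and `n_s⁽⁴⁾ = 0`. -/
theorem stmt5 (s : ℝ) :
    lcs8 s 1 = Submodule.span ℝ
        ({Pi.single 3 1, Pi.single 4 1, Pi.single 5 1, Pi.single 6 1,
          Pi.single 7 1} : Set (Fin 8 → ℝ)) ∧
    lcs8 s 2 = Submodule.span ℝ
        ({Pi.single 6 1, Pi.single 7 1} : Set (Fin 8 → ℝ)) ∧
    lcs8 s 3 = ⊥ := by
  simp only [lcs8_one, lcs8_two, lcs8_three, Pi.spanSubset, Pi.basisFun_apply,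
    Set.image_insert_eq, Set.image_singleton, and_self]
end

section
/- For each real s, the linear map D on the 8-dimensional Lie algebra n_s defined by D(x)=kx for x in V_k, where V₁ = span{x₁,x₂,x₃}, V₂ = span{x₄,x₅,x₆}, V₃ = span{x₇,x₈}, is a derivation of n_s, and [V_i,V_j] ⊆ V_{i+j} (with V_k=0 for k>3), so the V_i define an ℕ-grading of n_s. -/
/-- The grading subspaces of `n_s`: `V 1 = span{x₁,x₂,x₃}`, `V 2 = span{x₄,x₅,x₆}`,
`V 3 = span{x₇,x₈}`, and `V k = 0` otherwise. -/
noncomputable def V8 : ℕ → Submodule ℝ (Fin 8 → ℝ)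
  | 1 => Submodule.span ℝ
      ({Pi.single 0 1, Pi.single 1 1, Pi.single 2 1} : Set (Fin 8 → ℝ))
  | 2 => Submodule.span ℝ
      ({Pi.single 3 1, Pi.single 4 1, Pi.single 5 1} : Set (Fin 8 → ℝ))
  | 3 => Submodule.span ℝ
      ({Pi.single 6 1, Pi.single 7 1} : Set (Fin 8 → ℝ))
  | _ => ⊥

/-- The diagonal map `D(x) = k x` for `x ∈ V_k`. -/
noncomputable def D8 : (Fin 8 → ℝ) → (Fin 8 → ℝ) := fun v i =>
  (if (i : ℕ) < 3 then (1 : ℝ) else if (i : ℕ) < 6 then 2 else 3) * v i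

/-! Every bracket relation of `n_s` is homogeneous: `[xᵢ, xⱼ]` is a multiple of a single `x_m`
whose degree is the sum of the degrees of `xᵢ` and `xⱼ`, where `x₁, x₂, x₃` have degree 1,
`x₄, x₅, x₆` degree 2 and `x₇, x₈` degree 3. Then `D` multiplies each coordinate by its
degree, `V_k` is the space of vectors supported in degree `k`, and both claims reduce
coordinatewise to this homogeneity of the structure constants. -/

def weight8 : Fin 8 → ℕ := ![1, 1, 1, 2, 2, 2, 3, 3]

lemma D8_apply (v : Fin 8 → ℝ) (m : Fin 8) : D8 v m = weight8 m * v m := by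
  fin_cases m <;> simp [D8, weight8]

lemma weight8_eq_of_sc8_apply_ne_zero {s : ℝ} {i j m : Fin 8} (h : sc8 s i j m ≠ 0) :
    weight8 m = weight8 i + weight8 j := by
  unfold sc8 at h
  split_ifs at h <;>
    first
    | exact absurd rfl h
    | obtain ⟨rfl, rfl⟩ := ‹_ ∧ _›
      simp only [Pi.smul_apply, Pi.single_apply, smul_eq_mul, mul_ite, mul_one, mul_zero,
        ne_eq, ite_eq_right_iff, Classical.not_imp] at h
      rw [h.1]
      rfl

lemma weight8_eq_of_bb8_apply_ne_zero {s : ℝ} {i j m : Fin 8} (h : bb8 s i j m ≠ 0) :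
    weight8 m = weight8 i + weight8 j := by
  by_cases hij : sc8 s i j m = 0
  · have hji : sc8 s j i m ≠ 0 := by simpa [bb8, hij] using h
    rw [weight8_eq_of_sc8_apply_ne_zero hji, add_comm]
  · exact weight8_eq_of_sc8_apply_ne_zero hij

lemma weight8_mul_bb8_apply (s : ℝ) (i j m : Fin 8) :
    (weight8 m : ℝ) * bb8 s i j m = (weight8 i + weight8 j) * bb8 s i j m := by
  by_cases h : bb8 s i j m = 0
  · simp [h]
  · rw [weight8_eq_of_bb8_apply_ne_zero h, Nat.cast_add]

lemma bracket8_apply (s : ℝ) (u v : Fin 8 → ℝ) (m : Fin 8) :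
    bracket8 s u v m = ∑ i, ∑ j, u i * v j * bb8 s i j m := by
  simp [bracket8, Finset.sum_apply]

def weightSpace8 (k : ℕ) : Submodule ℝ (Fin 8 → ℝ) :=
  Submodule.pi {m | weight8 m ≠ k} fun _ => ⊥

lemma mem_weightSpace8 {k : ℕ} {u : Fin 8 → ℝ} :
    u ∈ weightSpace8 k ↔ ∀ m, weight8 m ≠ k → u m = 0 := by
  simp [weightSpace8]

lemma single_mem_weightSpace8 {k : ℕ} {m : Fin 8} (hm : weight8 m = k) (c : ℝ) :
    Pi.single m c ∈ weightSpace8 k :=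
  mem_weightSpace8.2 fun m' hm' => Pi.single_eq_of_ne (fun h : m' = m => hm' (h ▸ hm)) _

lemma single_mem_V8 {k : ℕ} {m : Fin 8} (hm : weight8 m = k) (c : ℝ) :
    Pi.single m c ∈ V8 k := by
  subst hm
  rw [show Pi.single m c = c • Pi.single m (1 : ℝ) by rw [← Pi.single_smul', smul_eq_mul, mul_one]]
  refine Submodule.smul_mem _ c ?_
  fin_cases m <;> exact Submodule.subset_span (by simp)

lemma V8_eq_weightSpace8 (k : ℕ) : V8 k = weightSpace8 k := by
  refine le_antisymm ?_ fun u hu => ?_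
  · match k with
    | 0 | k + 4 => exact bot_le
    | 1 | 2 | 3 =>
      simp only [V8, Submodule.span_le, Set.insert_subset_iff, Set.singleton_subset_iff]
      and_intros <;> exact single_mem_weightSpace8 (by rfl) 1
  · rw [← Finset.univ_sum_single u]
    refine Submodule.sum_mem _ fun m _ => ?_
    by_cases hm : weight8 m = k
    · exact single_mem_V8 hm _
    · simp [mem_weightSpace8.1 hu m hm]

lemma D8_bracket8 (s : ℝ) (u v : Fin 8 → ℝ) :
    D8 (bracket8 s u v) = bracket8 s (D8 u) v + bracket8 s u (D8 v) := by
  funext m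
  simp only [Pi.add_apply, D8_apply, bracket8_apply, Finset.mul_sum, ← Finset.sum_add_distrib]
  refine Finset.sum_congr rfl fun i _ => Finset.sum_congr rfl fun j _ => ?_
  linear_combination u i * v j * weight8_mul_bb8_apply s i j m

lemma bracket8_mem_weightSpace8 (s : ℝ) {a b : ℕ} {u v : Fin 8 → ℝ}
    (hu : u ∈ weightSpace8 a) (hv : v ∈ weightSpace8 b) :
    bracket8 s u v ∈ weightSpace8 (a + b) := by
  rw [mem_weightSpace8] at hu hv ⊢
  intro m hm
  rw [bracket8_apply]
  refine Finset.sum_eq_zero fun i _ => Finset.sum_eq_zero fun j _ => ?_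
  by_cases h : bb8 s i j m = 0
  · simp [h]
  have hw := weight8_eq_of_bb8_apply_ne_zero h
  by_cases hi : weight8 i = a
  · simp [hv j (by omega)]
  · simp [hu i hi]

/-- `D8` is a derivation of `n_s` and the `V_k` define an ℕ-grading:
`[Vᵢ, Vⱼ] ⊆ V_{i+j}`. -/
theorem stmt6 (s : ℝ) :
    (∀ u v : Fin 8 → ℝ,
        D8 (bracket8 s u v) = bracket8 s (D8 u) v + bracket8 s u (D8 v)) ∧
    (∀ i j : ℕ, ∀ u ∈ V8 i, ∀ v ∈ V8 j, bracket8 s u v ∈ V8 (i + j)) := by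
  refine ⟨D8_bracket8 s, fun i j u hu v hv => ?_⟩
  rw [V8_eq_weightSpace8] at hu hv ⊢
  exact bracket8_mem_weightSpace8 s hu hv
end

section
/- Let g be a Lie algebra and let i, j be ideals of g with g = i + j (not necessarily direct) and [i,j] = 0. Let π: g → g be a linear projection onto i (π restricted to i is the identity and π(g) = i) compatible with a basis adapted to the decomposition. If D is a derivation of g, then the restriction of π ∘ D to i is a derivation of the Lie algebra i. -/
/-! For `z : L`, the element `z - π z` lies in `ker π ⊆ J`, and `J` commutes with `I`. Hence for
`x, y ∈ I` one may replace `D x` by `π (D x)` in `⁅D x, y⁆` and `D y` by `π (D y)` in `⁅x, D y⁆`;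
the Leibniz rule for `D` then lands in `I`, where `π` is the identity. -/

section

variable {R L : Type*} [CommRing R] [LieRing L] [LieAlgebra R L] {I J : LieIdeal R L}

lemma sub_apply_mem_of_ker_mem {π : L →ₗ[R] L} (hπI : ∀ x ∈ I, π x = x)
    (hπrange : ∀ x : L, π x ∈ I) (hπker : ∀ y : L, π y = 0 → y ∈ J) (z : L) :
    z - π z ∈ J :=
  hπker _ (by rw [map_sub, hπI _ (hπrange z), sub_self])

lemma lie_right_eq_of_sub_mem (hcomm : ∀ x ∈ I, ∀ y ∈ J, ⁅x, y⁆ = (0 : L))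
    {x a b : L} (hx : x ∈ I) (hab : a - b ∈ J) : ⁅x, a⁆ = ⁅x, b⁆ := by
  rw [← sub_eq_zero, ← lie_sub, hcomm x hx _ hab]

lemma lie_left_eq_of_sub_mem (hcomm : ∀ x ∈ I, ∀ y ∈ J, ⁅x, y⁆ = (0 : L))
    {y a b : L} (hy : y ∈ I) (hab : a - b ∈ J) : ⁅a, y⁆ = ⁅b, y⁆ := by
  rw [← neg_inj, lie_skew, lie_skew, lie_right_eq_of_sub_mem hcomm hy hab]

end

theorem stmt9_general (L : Type*) [LieRing L] [LieAlgebra ℝ L]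
    (I J : LieIdeal ℝ L)
    (hcomm : ∀ x ∈ I, ∀ y ∈ J, ⁅x, y⁆ = (0 : L))
    (π : L →ₗ[ℝ] L)
    (hπI : ∀ x ∈ I, π x = x)
    (hπrange : ∀ x : L, π x ∈ I)
    (hπker : ∀ y : L, π y = 0 → y ∈ J)
    (D : L →ₗ[ℝ] L)
    (hD : ∀ x y : L, D ⁅x, y⁆ = ⁅D x, y⁆ + ⁅x, D y⁆) :
    ∀ x ∈ I, ∀ y ∈ I, π (D ⁅x, y⁆) = ⁅π (D x), y⁆ + ⁅x, π (D y)⁆ := by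
  intro x hx y hy
  have hJ := sub_apply_mem_of_ker_mem hπI hπrange hπker
  have hI : ⁅π (D x), y⁆ + ⁅x, π (D y)⁆ ∈ I :=
    I.add_mem (lie_mem_left ℝ L I _ _ (hπrange (D x))) (lie_mem_left ℝ L I x _ hx)
  rw [hD, lie_left_eq_of_sub_mem hcomm hy (hJ (D x)), lie_right_eq_of_sub_mem hcomm hx (hJ (D y)),
    hπI _ hI]

/-- If `g = i + j` with `i`, `j` commuting ideals, and `π` is a linear projection
onto `i` with kernel contained in `j`, then for any derivation `D` of `g`, the
restriction of `π ∘ D` to `i` is a derivation of `i`. -/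
theorem stmt9 (L : Type*) [LieRing L] [LieAlgebra ℝ L]
    (I J : LieIdeal ℝ L)
    (hsum : I ⊔ J = ⊤)
    (hcomm : ∀ x ∈ I, ∀ y ∈ J, ⁅x, y⁆ = (0 : L))
    (π : L →ₗ[ℝ] L)
    (hπI : ∀ x ∈ I, π x = x)
    (hπrange : ∀ x : L, π x ∈ I)
    (hπker : ∀ y : L, π y = 0 → y ∈ J)
    (D : L →ₗ[ℝ] L)
    (hD : ∀ x y : L, D ⁅x, y⁆ = ⁅D x, y⁆ + ⁅x, D y⁆) :
    ∀ x ∈ I, ∀ y ∈ I, π (D ⁅x, y⁆) = ⁅π (D x), y⁆ + ⁅x, π (D y)⁆ :=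
  stmt9_general L I J hcomm π hπI hπrange hπker D hD
end
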